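/- arXiv:1005.2636 — 3 statements merged into one kernel-verified Lean document; each statement's English description precedes it below -/
import Mathlib

section
/- Let α be a linearly ordered type, T a finitely branching tree over α, [T] its set of infinite branches, < the lexicographic order, and T' = {v ∈ T : v < P for every P ∈ [T]}. Then the lexicographic order restricted to T' is a well-order that is order-isomorphic to an initial segment of ω (i.e., order-isomorphic either to a finite linear order or to ℕ). -/
/-- `T` is a tree over `α`: a set of finite words closed under taking prefixes. -/
def IsTree {α : Type*} (T : Set (List α)) : Prop :=
  ∀ t ∈ T, ∀ s : List α, s <+: t → s ∈ T

/-- `T` is finitely branching: each node has only finitely many children. -/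
def FinitelyBranching {α : Type*} (T : Set (List α)) : Prop :=
  ∀ t ∈ T, {a : α | t ++ [a] ∈ T}.Finite

/-- `P : ℕ → α` is an infinite branch of `T`: all of its finite initial segments lie in `T`. -/
def IsBranch {α : Type*} (T : Set (List α)) (P : ℕ → α) : Prop :=
  ∀ n : ℕ, (List.ofFn fun i : Fin n => P i) ∈ T

/-- A node `v` is lexicographically below a branch `P` iff `v < w` for some finite
prefix `w` of `P`. -/
def NodeLtBranch {α : Type*} [LinearOrder α] (v : List α) (P : ℕ → α) : Prop :=
  ∃ n : ℕ, List.Lex (· < ·) v (List.ofFn fun i : Fin n => P i)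

/-- `T' = {v ∈ T : v < P for every infinite branch P of T}`. -/
def Tprime {α : Type*} [LinearOrder α] (T : Set (List α)) : Set (List α) :=
  {v ∈ T | ∀ P : ℕ → α, IsBranch T P → NodeLtBranch v P}


/-!
For `v ∈ T'`, the nodes of `T` that are not lexicographically above `v` form a finitely branching
subtree of `T`. If it were infinite, Kőnig's lemma would give an infinite branch `P` of it; `P` is
also a branch of `T`, so `v < P`, yet no finite prefix of `P` lies above `v`. Hence every element of
`T'` has only finitely many lexicographic predecessors, and a linear order with finite initial
segments is embedded into `ℕ` by counting predecessors, so it is isomorphic to `Fin k` or to `ℕ`.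
-/

open Set

section LinearOrder

variable {β : Type*} [LinearOrder β]

theorem strictMono_ncard_Iio (h : ∀ b : β, (Iio b).Finite) :
    StrictMono fun b : β => (Iio b).ncard :=
  fun _ b hab => ncard_lt_ncard (Iio_ssubset_Iio hab) (h b)

theorem exists_orderIso_fin_or_nat_of_finite_Iio (h : ∀ b : β, (Iio b).Finite) :
    (∃ k : ℕ, Nonempty (β ≃o Fin k)) ∨ Nonempty (β ≃o ℕ) := by
  rcases finite_or_infinite β with hβ | hβ
  · have := Fintype.ofFinite β
    exact .inl ⟨_, ⟨(Fintype.orderIsoFinOfCardEq β rfl).symm⟩⟩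
  · let e := (strictMono_ncard_Iio h).orderIso
    have : Infinite (range fun b : β => (Iio b).ncard) := e.toEquiv.infinite_iff.1 hβ
    exact .inr ⟨e.trans (Nat.Subtype.orderIsoOfNat _).symm⟩

end LinearOrder

section Tree

variable {α : Type*} {S T : Set (List α)}

/-- The nodes of `T` below `t`, written relative to `t`. -/
def subtreeAt (T : Set (List α)) (t : List α) : Set (List α) := {u | t ++ u ∈ T}

theorem subtreeAt_subset_insert_biUnion (hT : IsTree T) (t : List α) :
    subtreeAt T t ⊆
      insert [] (⋃ a ∈ {a | t ++ [a] ∈ T}, (a :: ·) '' subtreeAt T (t ++ [a])) := by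
  rintro (_ | ⟨a, u⟩) hu
  · exact mem_insert _ _
  · refine mem_insert_of_mem _ (mem_biUnion (hT _ hu _ ⟨u, by simp⟩) ⟨u, ?_, rfl⟩)
    simpa [subtreeAt] using hu

theorem exists_infinite_subtreeAt_child (hT : IsTree T) (hFB : FinitelyBranching T)
    {t : List α} (ht : t ∈ T) (hinf : (subtreeAt T t).Infinite) :
    ∃ a, t ++ [a] ∈ T ∧ (subtreeAt T (t ++ [a])).Infinite := by
  by_contra! hfin
  exact hinf <| (((hFB t ht).biUnion fun a ha => (hfin a ha).image _).insert []).subset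
    (subtreeAt_subset_insert_biUnion hT t)

/-- **Kőnig's lemma** for trees of words. -/
theorem exists_isBranch_of_infinite (hT : IsTree T) (hFB : FinitelyBranching T)
    (hinf : T.Infinite) : ∃ P : ℕ → α, IsBranch T P := by
  let Good (t : List α) : Prop := t ∈ T ∧ (subtreeAt T t).Infinite
  have hchild : ∀ t, Good t → ∃ a, Good (t ++ [a]) := fun t ht =>
    exists_infinite_subtreeAt_child hT hFB ht.1 ht.2
  have hroot : Good [] := by
    obtain ⟨t, ht⟩ := hinf.nonempty
    exact ⟨hT t ht [] List.nil_prefix, by simpa [subtreeAt] using hinf⟩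
  have : Nonempty α := let ⟨a, _⟩ := hchild [] hroot; ⟨a⟩
  choose! next hnext using hchild
  let path (n : ℕ) : List α := Nat.rec [] (fun _ t => t ++ [next t]) n
  have hgood (n : ℕ) : Good (path n) := Nat.rec hroot (fun _ ih => hnext _ ih) n
  have hpath (n : ℕ) : path n = List.ofFn fun i : Fin n => next (path i) := by
    induction n with
    | zero => rfl
    | succ n ih => simp only [List.ofFn_succ', List.concat_eq_append, Fin.val_castSucc,
        Fin.val_last, ← ih]; rfl
  exact ⟨fun n => next (path n), fun n => hpath n ▸ (hgood n).1⟩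

theorem FinitelyBranching.mono (hFB : FinitelyBranching T) (hST : S ⊆ T) :
    FinitelyBranching S :=
  fun t ht => (hFB t (hST ht)).subset fun _ ha => hST ha

theorem IsBranch.mono {P : ℕ → α} (hP : IsBranch S P) (hST : S ⊆ T) : IsBranch T P :=
  fun n => hST (hP n)

variable [LinearOrder α]

theorem IsTree.sep_not_lt (hT : IsTree T) (v : List α) : IsTree {w ∈ T | ¬ v < w} := by
  refine fun w ⟨hw, hvw⟩ u hu => ⟨hT w hw u hu, fun hvu => hvw ?_⟩
  -- core's `List.IsPrefix.le` is stated for core's `List.le`, which unfolds to `¬ w < u`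
  have huw : ¬ w < u := hu.le
  exact hvu.trans_le (not_lt.1 huw)

theorem finite_sep_not_lt_of_mem_Tprime (hT : IsTree T) (hFB : FinitelyBranching T)
    {v : List α} (hv : v ∈ Tprime T) : {w ∈ T | ¬ v < w}.Finite := by
  by_contra hinf
  obtain ⟨P, hP⟩ :=
    exists_isBranch_of_infinite (hT.sep_not_lt v) (hFB.mono (sep_subset _ _)) hinf
  obtain ⟨n, hn⟩ := hv.2 P (hP.mono (sep_subset _ _))
  exact (hP n).2 hn

theorem finite_Iio_Tprime (hT : IsTree T) (hFB : FinitelyBranching T) (v : Tprime T) :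
    (Iio v).Finite :=
  ((finite_sep_not_lt_of_mem_Tprime hT hFB v.2).preimage Subtype.val_injective.injOn).subset
    fun w hw => ⟨w.2.1, lt_asymm hw⟩

end Tree

/-- The lexicographic order restricted to `T'` is a well-order order-isomorphic to an
initial segment of `ω`: it is order-isomorphic either to some `Fin k` or to `ℕ`. -/
theorem Tprime_wellOrdered {α : Type*} [LinearOrder α] (T : Set (List α))
    (hT : IsTree T) (hFB : FinitelyBranching T) :
    (∃ k : ℕ, Nonempty
        ((fun v w : ↥(Tprime T) => List.Lex (· < ·) (v : List α) (w : List α)) ≃r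
          ((· < ·) : Fin k → Fin k → Prop))) ∨
      Nonempty
        ((fun v w : ↥(Tprime T) => List.Lex (· < ·) (v : List α) (w : List α)) ≃r
          ((· < ·) : ℕ → ℕ → Prop)) := by
  rcases exists_orderIso_fin_or_nat_of_finite_Iio (finite_Iio_Tprime hT hFB) with
    ⟨k, ⟨e⟩⟩ | ⟨⟨e⟩⟩
  · exact .inl ⟨k, ⟨e.toRelIsoLT⟩⟩
  · exact .inr ⟨e.toRelIsoLT⟩
end

section
/- Let α be a linearly ordered type, T a finitely branching tree over α, [T] its set of infinite branches, < the lexicographic order, and T' = {v ∈ T : v < P for every P ∈ [T]}. If T is infinite, then T' is infinite. -/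
/-! Along the leftmost path of König's lemma (from each node, go to the least child that still
has infinitely many extensions) the node `v` of depth `n` satisfies `v ≤ P|n` (the length-`n`
prefix of `P`) for every branch `P`: if `v = P|n`, the child `v ++ [P n]` has infinitely many
extensions, so the chosen child is at most it. Since `P|n` is a proper prefix of `P|(n+1)`,
`v < P`, and the path supplies an element of `T'` at every depth. -/

namespace List

theorem append_lt_append_of_length_eq {α : Type*} [LT α] :
    ∀ {s t : List α}, s < t → s.length = t.length → ∀ s' t' : List α, s ++ s' < t ++ t'
  | _, _, Lex.nil, hl, _, _ => by simp at hl
  | _, _, Lex.rel h, _, _, _ => Lex.rel h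
  | _, _, Lex.cons h, hl, s', t' =>
      Lex.cons (append_lt_append_of_length_eq h (by simpa using hl) s' t')

variable {α : Type*} (P : ℕ → α)

theorem ofFn_val_succ (n : ℕ) :
    (List.ofFn fun i : Fin (n + 1) => P i) = (List.ofFn fun i : Fin n => P i) ++ [P n] := by
  simp only [List.ofFn_succ', List.concat_eq_append, Fin.val_castSucc, Fin.val_last]

theorem ofFn_val_prefix {m k : ℕ} (hmk : m ≤ k) :
    (List.ofFn fun i : Fin m => P i) <+: List.ofFn fun i : Fin k => P i := by
  induction k, hmk using Nat.le_induction with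
  | base => exact List.prefix_rfl
  | succ k _ ih => exact ofFn_val_succ P k ▸ ih.trans (prefix_append _ _)

end List

section Extensions

variable {α : Type*} {T : Set (List α)}

def extensions (T : Set (List α)) (v : List α) : Set (List α) := {t ∈ T | v <+: t}

theorem extensions_nil : extensions T [] = T := by
  simp [extensions]

theorem IsTree.mem_of_extensions_nonempty (hT : IsTree T) {v : List α}
    (h : (extensions T v).Nonempty) : v ∈ T :=
  let ⟨t, htT, hvt⟩ := h
  hT t htT v hvt

theorem IsTree.extensions_subset (hT : IsTree T) (v : List α) :
    extensions T v ⊆ insert v (⋃ a ∈ {a | v ++ [a] ∈ T}, extensions T (v ++ [a])) := by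
  rintro t ⟨htT, r, rfl⟩
  cases r with
  | nil => simp
  | cons a r =>
    have hpre : v ++ [a] <+: v ++ a :: r := ⟨r, by simp⟩
    exact Or.inr (Set.mem_biUnion (hT _ htT _ hpre) ⟨htT, hpre⟩)

theorem IsTree.exists_child_extensions_infinite (hT : IsTree T) (hFB : FinitelyBranching T)
    {v : List α} (h : (extensions T v).Infinite) :
    ∃ a, (extensions T (v ++ [a])).Infinite := by
  by_contra! hfin
  have hvT : v ∈ T := hT.mem_of_extensions_nonempty h.nonempty
  exact h ((((hFB v hvT).biUnion fun a _ => hfin a).insert v).subset (hT.extensions_subset v))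

theorem IsTree.exists_min_child_extensions_infinite [LinearOrder α] (hT : IsTree T)
    (hFB : FinitelyBranching T) {v : List α} (h : (extensions T v).Infinite) :
    ∃ a, (extensions T (v ++ [a])).Infinite ∧
      ∀ b, (extensions T (v ++ [b])).Infinite → a ≤ b := by
  have hfin : {a | (extensions T (v ++ [a])).Infinite}.Finite :=
    (hFB v (hT.mem_of_extensions_nonempty h.nonempty)).subset fun a ha =>
      hT.mem_of_extensions_nonempty ha.nonempty
  obtain ⟨a, ha, hmin⟩ :=
    Set.exists_min_image _ id hfin (hT.exists_child_extensions_infinite hFB h)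
  exact ⟨a, ha, hmin⟩

theorem IsBranch.extensions_infinite {P : ℕ → α} (hP : IsBranch T P) (n : ℕ) :
    (extensions T (List.ofFn fun i : Fin n => P i)).Infinite := by
  refine Set.infinite_of_injective_forall_mem
    (f := fun k : ℕ => List.ofFn fun i : Fin (k + n) => P i)
    (fun a b hab => by simpa using congrArg List.length hab) fun k => ?_
  exact ⟨hP _, List.ofFn_val_prefix P (Nat.le_add_left n k)⟩

end Extensions

section Leftmost

variable {α : Type*} [LinearOrder α] {T : Set (List α)}

theorem IsTree.exists_extensions_infinite_le_branches (hT : IsTree T)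
    (hFB : FinitelyBranching T) (hinf : T.Infinite) (n : ℕ) :
    ∃ v : List α, v.length = n ∧ (extensions T v).Infinite ∧
      ∀ P, IsBranch T P → v ≤ List.ofFn fun i : Fin n => P i := by
  induction n with
  | zero => exact ⟨[], rfl, by rwa [extensions_nil], fun P _ => by simp⟩
  | succ n ih =>
    obtain ⟨v, hlen, hvinf, hle⟩ := ih
    obtain ⟨a, hainf, hmin⟩ := hT.exists_min_child_extensions_infinite hFB hvinf
    refine ⟨v ++ [a], by simp [hlen], hainf, fun P hP => ?_⟩
    rw [List.ofFn_val_succ]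
    rcases (hle P hP).lt_or_eq with hlt | rfl
    · exact (List.append_lt_append_of_length_eq hlt (by simp [hlen]) _ _).le
    · have haP : a ≤ P n := hmin _ (List.ofFn_val_succ P n ▸ hP.extensions_infinite (n + 1))
      rcases haP.lt_or_eq with hlt | rfl
      · exact (List.append_left_lt (List.Lex.rel hlt)).le
      · exact le_rfl

theorem mem_Tprime_of_le_branches {v : List α} {n : ℕ} (hvT : v ∈ T)
    (hle : ∀ P, IsBranch T P → v ≤ List.ofFn fun i : Fin n => P i) : v ∈ Tprime T := by
  refine ⟨hvT, fun P hP => ⟨n + 1, ?_⟩⟩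
  rw [List.ofFn_val_succ]
  exact (hle P hP).trans_lt (by simpa using List.append_left_lt (List.nil_lt_cons (P n) []))

end Leftmost

/-- If `T` is infinite then `T'` is infinite. -/
theorem Tprime_infinite {α : Type*} [LinearOrder α] (T : Set (List α))
    (hT : IsTree T) (hFB : FinitelyBranching T) (hinf : T.Infinite) :
    (Tprime T).Infinite := by
  refine Set.Infinite.of_image List.length (Set.infinite_univ.mono fun n _ => ?_)
  obtain ⟨v, hlen, hvinf, hle⟩ := hT.exists_extensions_infinite_le_branches hFB hinf n
  exact ⟨v, mem_Tprime_of_le_branches (hT.mem_of_extensions_nonempty hvinf.nonempty) hle, hlen⟩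
end

section
/- Let A be a finite alphabet, n ≥ 1, and let w₁, w₂ be nonempty words over A. Suppose that for every nonempty word w' over A with |w'| ≤ n, the three counts #(w₁, w'), #(w₂, w'), and #(w₁w₂, w') are all congruent modulo 2 (where w₁w₂ denotes concatenation). Then for every nonempty word w' with |w'| ≤ n, all three counts #(w₁, w'), #(w₂, w'), and #(w₁w₂, w') are even. -/
/-!
Splitting an occurrence of `w'` in `w₁w₂` at the first letter that falls into `w₂` gives
`#(w₁w₂, w') = ∑ₖ #(w₁, w'[:k]) · #(w₂, w'[k:])`. For nonempty `w'` the two extreme terms are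
`#(w₂, w')` and `#(w₁, w')`, so `#(w₁w₂, w') ≡ #(w₂, w')` forces `#(w₁, w')` to have the parity of
the middle terms. Each of those has a factor `#(w₁, u)` with `u` a shorter nonempty prefix of `w'`,
so by induction on `|w'|` they are all even; hence `#(w₁, w')` is even, and the two congruences
transfer this to `#(w₂, w')` and `#(w₁w₂, w')`.
-/

/-- `#(w, w')`: the number of ways in which `w'` occurs as a subsequence of `w`,
i.e. the number of strictly increasing tuples of indices
`0 ≤ x₀ < x₁ < … < x_{|w'|−1} < |w|` with `w(xᵢ) = w'(i)` for all `i`. -/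
noncomputable def subseqCount {α : Type*} (w w' : List α) : ℕ :=
  Nat.card {f : Fin w'.length → Fin w.length //
    StrictMono f ∧ ∀ i : Fin w'.length, w.get (f i) = w'.get i}

section

variable {α : Type*} {a b : α} {w v : List α}

abbrev SubseqOccurrence (w w' : List α) : Type _ :=
  {f : Fin w'.length → Fin w.length // StrictMono f ∧ ∀ i, w.get (f i) = w'.get i}

namespace SubseqOccurrence

def shift (a : α) {w' : List α} (g : SubseqOccurrence w w') : SubseqOccurrence (a :: w) w' :=
  ⟨Fin.succ ∘ g.1, Fin.strictMono_succ.comp g.2.1, fun i => by simpa using g.2.2 i⟩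

theorem shift_injective (a : α) {w' : List α} :
    Function.Injective (shift a : SubseqOccurrence w w' → SubseqOccurrence (a :: w) w') :=
  fun _ _ h => Subtype.ext <| funext fun i =>
    Fin.succ_injective _ (congrFun (congrArg Subtype.val h) i)

theorem exists_shift_eq {w' : List α} (f : SubseqOccurrence (a :: w) w') (hf : ∀ i, f.1 i ≠ 0) :
    ∃ g, shift a g = f := by
  refine ⟨⟨fun i => (f.1 i).pred (hf i), fun i j hij => Fin.pred_lt_pred_iff.2 (f.2.1 hij),
    fun i => (congrArg (a :: w).get (Fin.succ_pred (f.1 i) (hf i))).trans (f.2.2 i)⟩,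
    Subtype.ext (funext fun i => Fin.succ_pred (f.1 i) (hf i))⟩

theorem apply_succ_ne_zero (f : SubseqOccurrence (a :: w) (b :: v)) (i : Fin v.length) :
    f.1 i.succ ≠ 0 :=
  ne_of_gt ((Fin.zero_le _).trans_lt (f.2.1 i.succ_pos))

theorem apply_ne_zero (f : SubseqOccurrence (a :: w) (b :: v)) (h : f.1 0 ≠ 0)
    (i : Fin (b :: v).length) : f.1 i ≠ 0 :=
  Fin.cases h (apply_succ_ne_zero f) i

theorem head_eq_of_apply_zero_eq_zero (f : SubseqOccurrence (a :: w) (b :: v)) (h : f.1 0 = 0) :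
    a = b := by
  simpa [h] using f.2.2 0

def tail (f : SubseqOccurrence w (b :: v)) : SubseqOccurrence w v :=
  ⟨f.1 ∘ Fin.succ, f.2.1.comp Fin.strictMono_succ, fun i => by simpa using f.2.2 i.succ⟩

def cons (a : α) (g : SubseqOccurrence w v) : SubseqOccurrence (a :: w) (a :: v) :=
  ⟨Fin.cons 0 (shift a g).1, Fin.strictMono_cons.2 ⟨fun _ => Fin.succ_pos _, (shift a g).2.1⟩,
    Fin.cases (by simp) fun i => by simpa using (shift a g).2.2 i⟩

theorem cons_injective (a : α) :
    Function.Injective (cons a : SubseqOccurrence w v → SubseqOccurrence (a :: w) (a :: v)) :=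
  fun _ _ h => shift_injective a <| Subtype.ext <|
    Fin.cons_right_injective (α := fun _ => Fin (a :: w).length) 0 (congrArg Subtype.val h)

end SubseqOccurrence

open SubseqOccurrence

theorem subseqCount_nil_right (w : List α) : subseqCount w [] = 1 :=
  Nat.card_eq_one_iff_unique.2
    ⟨⟨fun _ _ => Subtype.ext (funext fun i => i.elim0)⟩,
      ⟨⟨fun i => i.elim0, fun i => i.elim0, fun i => i.elim0⟩⟩⟩

theorem subseqCount_nil_cons (b : α) (v : List α) : subseqCount [] (b :: v) = 0 :=
  have : IsEmpty (SubseqOccurrence [] (b :: v)) := ⟨fun f => (f.1 0).elim0⟩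
  Nat.card_of_isEmpty

theorem subseqCount_cons_cons_of_ne (hab : a ≠ b) :
    subseqCount (a :: w) (b :: v) = subseqCount w (b :: v) :=
  (Nat.card_eq_of_bijective (shift a) ⟨shift_injective a, fun f =>
    exists_shift_eq f (apply_ne_zero f fun h => hab (head_eq_of_apply_zero_eq_zero f h))⟩).symm

theorem subseqCount_cons_cons_self :
    subseqCount (a :: w) (a :: v) = subseqCount w v + subseqCount w (a :: v) := by
  -- an occurrence either matches the head `a` to the head `a` (image of `cons`) or skips it
  rw [subseqCount, subseqCount, subseqCount, ← Nat.card_sum]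
  refine (Nat.card_eq_of_bijective (Sum.elim (cons a) (shift a)) ⟨?_, fun f => ?_⟩).symm
  · refine (cons_injective a).sumElim (shift_injective a) fun _ _ h => ?_
    exact (Fin.succ_ne_zero _) (congrFun (congrArg Subtype.val h) 0).symm
  · by_cases h0 : f.1 0 = 0
    · obtain ⟨g, hg⟩ := exists_shift_eq (tail f) (apply_succ_ne_zero f)
      refine ⟨Sum.inl g, Subtype.ext ?_⟩
      change Fin.cons 0 (shift a g).1 = f.1
      rw [hg, ← h0]
      exact Fin.cons_self_tail f.1
    · obtain ⟨g, hg⟩ := exists_shift_eq f (apply_ne_zero f h0)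
      exact ⟨Sum.inr g, hg⟩

theorem subseqCount_cons_cons [DecidableEq α] (a b : α) (w v : List α) :
    subseqCount (a :: w) (b :: v) =
      (if a = b then subseqCount w v else 0) + subseqCount w (b :: v) := by
  split_ifs with hab
  · subst hab; exact subseqCount_cons_cons_self
  · rw [zero_add, subseqCount_cons_cons_of_ne hab]

theorem subseqCount_append (u v w' : List α) :
    subseqCount (u ++ v) w' = ∑ k ∈ Finset.range (w'.length + 1),
      subseqCount u (w'.take k) * subseqCount v (w'.drop k) := by
  classical
  induction u generalizing w' with
  | nil =>
    cases w' with
    | nil => simp [subseqCount_nil_right]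
    | cons b c => simp [Finset.sum_range_succ', subseqCount_nil_cons, subseqCount_nil_right]
  | cons a t ih =>
    cases w' with
    | nil => simp [subseqCount_nil_right]
    | cons b c =>
      rw [List.cons_append, subseqCount_cons_cons, ih, ih, List.length_cons,
        Finset.sum_range_succ' _ (c.length + 1), Finset.sum_range_succ' _ (c.length + 1)]
      simp only [List.take_succ_cons, List.drop_succ_cons, List.take_zero, List.drop_zero,
        subseqCount_cons_cons, subseqCount_nil_right, add_mul, Finset.sum_add_distrib, ite_mul,
        zero_mul, Finset.sum_ite_irrel, Finset.sum_const_zero]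
      ring

theorem two_dvd_subseqCount_of_append_modEq {u v : List α} {n : ℕ}
    (h : ∀ w', w' ≠ [] → w'.length ≤ n → subseqCount (u ++ v) w' ≡ subseqCount v w' [MOD 2])
    (w' : List α) (hw' : w' ≠ []) (hlen : w'.length ≤ n) : 2 ∣ subseqCount u w' := by
  obtain ⟨m, hm⟩ : ∃ m, w'.length = m + 1 :=
    Nat.exists_eq_succ_of_ne_zero (List.length_pos_iff.2 hw').ne'
  have hsplit : subseqCount (u ++ v) w' = subseqCount v w' + subseqCount u w' +
      ∑ k ∈ Finset.range m,
        subseqCount u (w'.take (k + 1)) * subseqCount v (w'.drop (k + 1)) := by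
    rw [subseqCount_append, hm, Finset.sum_range_succ, Finset.sum_range_succ', ← hm]
    simp only [List.take_zero, List.drop_zero, List.take_length, List.drop_length,
      subseqCount_nil_right, one_mul, mul_one]
    ring
  have hmid : 2 ∣ ∑ k ∈ Finset.range m,
      subseqCount u (w'.take (k + 1)) * subseqCount v (w'.drop (k + 1)) :=
    Finset.dvd_sum fun k hk => by
      have hkm : k < m := Finset.mem_range.1 hk
      have htake : (w'.take (k + 1)).length = k + 1 := by
        rw [List.length_take, hm]; omega
      refine dvd_mul_of_dvd_left (two_dvd_subseqCount_of_append_modEq h _ ?_ (by omega)) _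
      exact List.ne_nil_of_length_pos (by omega)
  have hmod := h w' hw' hlen
  unfold Nat.ModEq at hmod
  omega
termination_by w'.length
decreasing_by omega

end

theorem subseqCounts_even_of_congruent_general {α : Type*} (n : ℕ)
    (w₁ w₂ : List α)
    (h : ∀ w' : List α, w' ≠ [] → w'.length ≤ n →
      subseqCount w₁ w' % 2 = subseqCount w₂ w' % 2 ∧
      subseqCount w₂ w' % 2 = subseqCount (w₁ ++ w₂) w' % 2) :
    ∀ w' : List α, w' ≠ [] → w'.length ≤ n →
      2 ∣ subseqCount w₁ w' ∧ 2 ∣ subseqCount w₂ w' ∧ 2 ∣ subseqCount (w₁ ++ w₂) w' := by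
  intro w' hw' hlen
  have h₁ : 2 ∣ subseqCount w₁ w' :=
    two_dvd_subseqCount_of_append_modEq (fun u hu hun => (h u hu hun).2.symm) w' hw' hlen
  obtain ⟨h₁₂, h₂₃⟩ := h w' hw' hlen
  omega

/-- If for every nonempty word `w'` of length at most `n` the three counts
`#(w₁, w')`, `#(w₂, w')` and `#(w₁w₂, w')` are congruent modulo 2, then all three
counts are even for every such `w'`. -/
theorem subseqCounts_even_of_congruent {α : Type*} (n : ℕ) (hn : 1 ≤ n)
    (w₁ w₂ : List α) (hw₁ : w₁ ≠ []) (hw₂ : w₂ ≠ [])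
    (h : ∀ w' : List α, w' ≠ [] → w'.length ≤ n →
      subseqCount w₁ w' % 2 = subseqCount w₂ w' % 2 ∧
      subseqCount w₂ w' % 2 = subseqCount (w₁ ++ w₂) w' % 2) :
    ∀ w' : List α, w' ≠ [] → w'.length ≤ n →
      2 ∣ subseqCount w₁ w' ∧ 2 ∣ subseqCount w₂ w' ∧ 2 ∣ subseqCount (w₁ ++ w₂) w' :=
  subseqCounts_even_of_congruent_general n w₁ w₂ h
end
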